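/- Let n ≥ 3, let L ≥ n, and let u₁, …, u_L ∈ ℝ^{n−1} be vectors in general linear position (any n−1 of them are linearly independent). Then every induced subgraph on n vertices of the orthogonality graph of u₁, …, u_L is connected. -/

import Mathlib

open scoped RealInnerProductSpace

/-- The orthogonality graph of a family of vectors: vertices `i ≠ j` are
adjacent iff `⟨uᵢ, uⱼ⟩ ≠ 0`. -/
def orthGraph {d L : ℕ} (u : Fin L → EuclideanSpace ℝ (Fin d)) :
    SimpleGraph (Fin L) where
  Adj i j := i ≠ j ∧ ⟪u i, u j⟫ ≠ 0
  symm := by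
    constructor
    rintro i j ⟨hij, hinner⟩
    exact ⟨hij.symm, by rwa [real_inner_comm]⟩
  loopless := by constructor; rintro i ⟨h, -⟩; exact h rfl

/-- Any subfamily of size at most `n - 1` is linearly independent. -/
lemma li_small (n L : ℕ) (hL : n - 1 ≤ L)
    (u : Fin L → EuclideanSpace ℝ (Fin (n - 1)))
    (hgen : ∀ s : Finset (Fin L), s.card = n - 1 →
      LinearIndependent ℝ (fun i : s => u i.1))
    (A : Finset (Fin L)) (hA : A.card ≤ n - 1) :
    LinearIndependent ℝ (fun a : A => u a.1) := by
  obtain ⟨T, hAT, hTc⟩ := Finset.exists_subsuperset_card_eq (A.subset_univ) hA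
    (by simpa using hL)
  have hli := hgen T hTc.2
  have : (fun a : A => u a.1) = (fun i : T => u i.1) ∘ (fun a : A => (⟨a.1, hAT a.2⟩ : T)) := rfl
  rw [this]
  exact hli.comp _ (fun a b hab => Subtype.ext (Subtype.mk_eq_mk.mp hab))

/-- Two mutually orthogonal nonoverlapping subfamilies cannot have total size `n`. -/
lemma li_pair (n L : ℕ) (hn : 0 < n) (hL : n - 1 ≤ L)
    (u : Fin L → EuclideanSpace ℝ (Fin (n - 1)))
    (hgen : ∀ s : Finset (Fin L), s.card = n - 1 →
      LinearIndependent ℝ (fun i : s => u i.1))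
    (A B : Finset (Fin L))
    (hAc : A.card ≤ n - 1) (hBc : B.card ≤ n - 1) (hcard : A.card + B.card = n)
    (horth : ∀ a ∈ A, ∀ b ∈ B, ⟪u a, u b⟫ = 0) : False := by
  have hA := li_small n L hL u hgen A hAc
  have hB := li_small n L hL u hgen B hBc
  set SA := Submodule.span ℝ (Set.range (fun a : A => u a.1)) with hSA
  have hBmem : ∀ b : B, u b.1 ∈ SAᗮ := by
    intro b
    rw [Submodule.mem_orthogonal]
    intro w hw
    induction hw using Submodule.span_induction with
    | mem x hx =>
        obtain ⟨a, rfl⟩ := hx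
        exact horth a.1 a.2 b.1 b.2
    | zero => exact inner_zero_left _
    | add x y _ _ hx hy => rw [inner_add_left, hx, hy, add_zero]
    | smul c x _ hx => rw [real_inner_smul_left, hx, mul_zero]
  have hle : Submodule.span ℝ (Set.range (fun b : B => u b.1)) ≤ SAᗮ := by
    rw [Submodule.span_le]
    rintro _ ⟨b, rfl⟩
    exact hBmem b
  have hdisj : Disjoint SA (Submodule.span ℝ (Set.range (fun b : B => u b.1))) :=
    (Submodule.orthogonal_disjoint SA).mono_right hle
  have hli : LinearIndependent ℝ (Sum.elim (fun a : A => u a.1) (fun b : B => u b.1)) :=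
    hA.sum_type hB hdisj
  have hcard' := hli.fintype_card_le_finrank
  rw [Fintype.card_sum, Fintype.card_coe, Fintype.card_coe, hcard,
    finrank_euclideanSpace, Fintype.card_fin] at hcard'
  omega

/-- if `n ≥ 3`, `L ≥ n` and `u₁, …, u_L ∈ ℝ^{n-1}` are in general
linear position (any `n-1` of them linearly independent), then every induced
subgraph on `n` vertices of the orthogonality graph of `u₁, …, u_L` is
connected. -/
theorem orthGraph_induced_subgraphs_connected
    (n L : ℕ) (hn : 3 ≤ n) (hL : n ≤ L)
    (u : Fin L → EuclideanSpace ℝ (Fin (n - 1)))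
    (hgen : ∀ s : Finset (Fin L), s.card = n - 1 →
      LinearIndependent ℝ (fun i : s => u i.1)) :
    ∀ s : Finset (Fin L), s.card = n →
      ((orthGraph u).induce (s : Set (Fin L))).Connected := by
  classical
  intro s hs
  set G := (orthGraph u).induce (s : Set (Fin L)) with hG
  rw [SimpleGraph.connected_iff]
  have hsn : s.Nonempty := Finset.card_pos.mp (by omega)
  refine ⟨?_, ⟨⟨hsn.choose, Finset.mem_coe.mpr hsn.choose_spec⟩⟩⟩
  by_contra hpc
  rw [SimpleGraph.Preconnected] at hpc
  push_neg at hpc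
  obtain ⟨v, w, hvw⟩ := hpc
  set A : Finset (Fin L) :=
    s.filter (fun i => ∃ h : i ∈ (s : Set (Fin L)), G.Reachable v ⟨i, h⟩) with hA
  set B : Finset (Fin L) := s \ A with hB
  have hAs : A ⊆ s := Finset.filter_subset _ _
  have hvA : v.1 ∈ A := by
    rw [hA, Finset.mem_filter]
    exact ⟨Finset.mem_coe.mp v.2, v.2, by rw [Subtype.coe_eta]⟩
  have hwB : w.1 ∈ B := by
    rw [hB, Finset.mem_sdiff]
    refine ⟨Finset.mem_coe.mp w.2, fun hw => ?_⟩
    rw [hA, Finset.mem_filter] at hw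
    obtain ⟨-, h, hr⟩ := hw
    exact hvw (by rwa [Subtype.coe_eta] at hr)
  have horth : ∀ a ∈ A, ∀ b ∈ B, ⟪u a, u b⟫ = 0 := by
    intro a ha b hb
    by_contra hne
    rw [hA, Finset.mem_filter] at ha
    obtain ⟨has, ha', hra⟩ := ha
    rw [hB, Finset.mem_sdiff] at hb
    obtain ⟨hbs, hbA⟩ := hb
    have hab : a ≠ b := by
      rintro rfl
      exact hbA (Finset.mem_filter.mpr ⟨has, ha', hra⟩)
    have hadj : G.Adj ⟨a, ha'⟩ ⟨b, Finset.mem_coe.mpr hbs⟩ := by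
      rw [hG]
      exact ⟨hab, hne⟩
    exact hbA (Finset.mem_filter.mpr ⟨hbs, Finset.mem_coe.mpr hbs, hra.trans hadj.reachable⟩)
  have hcards : A.card + B.card = n := by
    rw [hB]
    rw [Finset.card_sdiff_of_subset hAs]
    have := Finset.card_le_card hAs
    omega
  have hAne : A.Nonempty := ⟨v.1, hvA⟩
  have hBne : B.Nonempty := ⟨w.1, hwB⟩
  have hAcard : A.card ≤ n - 1 := by
    have := Finset.card_pos.mpr hBne
    omega
  have hBcard : B.card ≤ n - 1 := by
    have := Finset.card_pos.mpr hAne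
    omega
  exact li_pair n L (by omega) (by omega) u hgen A B hAcard hBcard hcards horth
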